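/- arXiv:2002.03755 — 8 statements merged into one kernel-verified Lean document; each statement's English description precedes it below -/
import Mathlib

section
/- Let C₁, C₂ ≥ 0, C_ζ > 0, C_η > 0, 0 < a ≤ 1, and b ∈ ℝ with C_η > 1 + b − a and (b − a) ∉ [−1, 0]. Set η_t = C_η / t^a and ζ_t = C_ζ / t^b for integers t ≥ 1. If (A_t)_{t≥1} is a sequence of nonnegative reals satisfying A_{t+1} ≤ (1 − η_t + C₁ η_t²) A_t + C₂ ζ_t for all t ≥ 1, then there exists a constant C_A > 0 such that A_t ≤ C_A / t^{b−a} for all t ≥ 1. -/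
/-!
Write `c = b - a`. Bernoulli's inequality `(1 + 1/t)^(-c) ≥ 1 - c/t`, valid because `-c ∉ (0, 1)`,
together with `c/t ≤ max c 0 / t^a` (as `a ≤ 1`), shows that once `η_t` is small one step of the
recurrence maps the bound `C / t^c` to `C / (t+1)^c`, provided `C ≥ 2 C₂ C_ζ / (C_η - max c 0)`;
the margin `C_η - max c 0 > 0` is where `C_η > 1 + b - a` enters. Induction from a large `T`
gives the bound for `t ≥ T`, and the finitely many earlier terms are absorbed into the constant.
-/

open Filter Real

theorem one_add_mul_le_rpow_one_add_of_nonpos {s p : ℝ} (hs : -1 < s) (hp : p ≤ 0) :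
    1 + p * s ≤ (1 + s) ^ p := by
  have h1s : 0 < 1 + s := by linarith
  have hlog : p * s ≤ p * log (1 + s) :=
    mul_le_mul_of_nonpos_left (by linarith [log_le_sub_one_of_pos h1s]) hp
  rw [rpow_def_of_pos h1s]
  linarith [add_one_le_exp (log (1 + s) * p), mul_comm p (log (1 + s))]

theorem one_add_mul_le_rpow_one_add {s p : ℝ} (hs : -1 < s) (hp : p ≤ 0 ∨ 1 ≤ p) :
    1 + p * s ≤ (1 + s) ^ p :=
  hp.elim (one_add_mul_le_rpow_one_add_of_nonpos hs) (one_add_mul_self_le_rpow_one_add hs.le)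

theorem one_sub_div_mul_rpow_add_one_le {x c : ℝ} (hx : 0 < x) (hc : c ≤ -1 ∨ 0 ≤ c) :
    (1 - c / x) * (x + 1) ^ c ≤ x ^ c := by
  have hx' : 0 < 1 + 1 / x := by positivity
  have hbern : 1 + -c * (1 / x) ≤ (1 + 1 / x) ^ (-c) :=
    one_add_mul_le_rpow_one_add (by linarith [one_div_pos.2 hx])
      (hc.imp (fun h => by linarith) (fun h => by linarith)).symm
  have hsplit : (x + 1) ^ c = x ^ c * ((1 + 1 / x) ^ (-c))⁻¹ := by
    rw [rpow_neg hx'.le, inv_inv, ← mul_rpow hx.le hx'.le]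
    congr 1
    field_simp
  rw [hsplit, ← mul_assoc, mul_comm _ (x ^ c), mul_assoc]
  refine mul_le_of_le_one_right (by positivity) ?_
  rw [← div_eq_mul_inv, div_le_one (by positivity)]
  linarith [show 1 + -c * (1 / x) = 1 - c / x by ring]

theorem le_supersolution_of_linear_recurrence {x u f g : ℕ → ℝ} {T : ℕ}
    (hf : ∀ t, T ≤ t → 0 ≤ f t) (hx : ∀ t, T ≤ t → x (t + 1) ≤ f t * x t + g t)
    (hu : ∀ t, T ≤ t → f t * u t + g t ≤ u (t + 1)) (hT : x T ≤ u T) :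
    ∀ t, T ≤ t → x t ≤ u t := by
  intro t ht
  induction t, ht using Nat.le_induction with
  | base => exact hT
  | succ t ht ih =>
    calc x (t + 1) ≤ f t * x t + g t := hx t ht
      _ ≤ f t * u t + g t := by gcongr; exact hf t ht
      _ ≤ u (t + 1) := hu t ht

theorem exists_pos_le_div_of_eventually {A v : ℕ → ℝ} (hv : ∀ t, 1 ≤ t → 0 < v t) {C : ℝ}
    {T : ℕ} (h : ∀ t, T ≤ t → A t ≤ C / v t) :
    ∃ C' : ℝ, 0 < C' ∧ ∀ t, 1 ≤ t → A t ≤ C' / v t := by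
  obtain ⟨B, hB⟩ := ((Set.finite_lt_nat T).image fun t => A t * v t).bddAbove
  refine ⟨max (max C B) 1, by positivity, fun t ht => ?_⟩
  rw [le_div_iff₀ (hv t ht)]
  rcases lt_or_ge t T with htT | htT
  · exact (hB ⟨t, htT, rfl⟩).trans ((le_max_right C B).trans (le_max_left _ _))
  · rw [← le_div_iff₀ (hv t ht)]
    exact (h t htT).trans <|
      div_le_div_of_nonneg_right ((le_max_left C B).trans (le_max_left _ _)) (hv t ht).le

theorem recurrence_step_le_div_rpow {a b Cη C₁ K C x : ℝ} (ha1 : a ≤ 1)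
    (hc : b - a ≤ -1 ∨ 0 ≤ b - a) (hx : 1 ≤ x) (hC : 0 ≤ C)
    (hsmall : 2 * C₁ * Cη ^ 2 ≤ (Cη - max (b - a) 0) * x ^ a)
    (hK : 2 * K ≤ (Cη - max (b - a) 0) * C) :
    (1 - Cη / x ^ a + C₁ * (Cη / x ^ a) ^ 2) * (C / x ^ (b - a)) + K / x ^ b
      ≤ C / (x + 1) ^ (b - a) := by
  set c := b - a
  set M := max c 0
  have hx0 : 0 < x := by linarith
  have hy : 0 < x ^ a := rpow_pos_of_pos hx0 a
  have hz : 0 < x ^ c := rpow_pos_of_pos hx0 c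
  have hw : 0 < (x + 1) ^ c := rpow_pos_of_pos (by linarith) c
  have hb : x ^ b = x ^ c * x ^ a := by rw [← rpow_add hx0, sub_add_cancel]
  have hM : c / x ≤ M / x ^ a :=
    (div_le_div_of_nonneg_right (le_max_left c 0) hx0.le).trans <|
      div_le_div_of_nonneg_left (le_max_right c 0) hy (rpow_le_self_of_one_le hx ha1)
  have hcontract : (1 - Cη / x ^ a + C₁ * (Cη / x ^ a) ^ 2) * C + K / x ^ a
      ≤ (1 - M / x ^ a) * C := by
    have hquad : C₁ * Cη ^ 2 / x ^ a * C + K ≤ (Cη - M) * C := by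
      have : C₁ * Cη ^ 2 / x ^ a ≤ (Cη - M) / 2 := by
        rw [div_le_iff₀ hy]; linarith
      nlinarith
    have hdiff : (1 - M / x ^ a) * C
        - ((1 - Cη / x ^ a + C₁ * (Cη / x ^ a) ^ 2) * C + K / x ^ a)
        = ((Cη - M) * C - (C₁ * Cη ^ 2 / x ^ a * C + K)) / x ^ a := by
      field_simp; ring
    have : 0 ≤ ((Cη - M) * C - (C₁ * Cη ^ 2 / x ^ a * C + K)) / x ^ a :=
      div_nonneg (by linarith) hy.le
    linarith
  calc (1 - Cη / x ^ a + C₁ * (Cη / x ^ a) ^ 2) * (C / x ^ c) + K / x ^ b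
      = ((1 - Cη / x ^ a + C₁ * (Cη / x ^ a) ^ 2) * C + K / x ^ a) / x ^ c := by
        rw [hb]; field_simp
    _ ≤ (1 - M / x ^ a) * C / x ^ c := by gcongr
    _ ≤ (1 - c / x) * C / x ^ c := by gcongr
    _ ≤ C / (x + 1) ^ c := by
        rw [div_le_div_iff₀ hz hw, mul_right_comm, mul_comm C]
        exact mul_le_mul_of_nonneg_right (one_sub_div_mul_rpow_add_one_le hx0 hc) hC

theorem stmt_1_general (C₁ C₂ Cζ Cη a b : ℝ)
    (hC₁ : 0 ≤ C₁) (hCη : 0 < Cη)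
    (ha0 : 0 < a) (ha1 : a ≤ 1)
    (hCη' : 1 + b - a < Cη) (hba : (b - a) ∉ Set.Icc (-1 : ℝ) 0)
    (A : ℕ → ℝ)
    (hrec : ∀ t : ℕ, 1 ≤ t →
      A (t + 1) ≤ (1 - Cη / (t : ℝ) ^ a + C₁ * (Cη / (t : ℝ) ^ a) ^ 2) * A t
        + C₂ * (Cζ / (t : ℝ) ^ b)) :
    ∃ C_A : ℝ, 0 < C_A ∧ ∀ t : ℕ, 1 ≤ t → A t ≤ C_A / (t : ℝ) ^ (b - a) := by
  have hc : b - a ≤ -1 ∨ 0 ≤ b - a := by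
    simp only [Set.mem_Icc, not_and_or, not_le] at hba
    exact hba.imp le_of_lt le_of_lt
  set δ := Cη - max (b - a) 0
  have hδ : 0 < δ := sub_pos.2 (max_lt (by linarith) hCη)
  have hpow : Tendsto (fun t : ℕ => (t : ℝ) ^ a) atTop atTop :=
    (tendsto_rpow_atTop ha0).comp tendsto_natCast_atTop_atTop
  obtain ⟨T, hT⟩ := ((eventually_ge_atTop 1).and ((hpow.eventually_ge_atTop Cη).and
    (hpow.eventually_ge_atTop (2 * C₁ * Cη ^ 2 / δ)))).exists_forall_of_atTop
  have hv : ∀ t : ℕ, 1 ≤ t → 0 < (t : ℝ) ^ (b - a) := fun t ht =>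
    rpow_pos_of_pos (by exact_mod_cast ht) _
  set C := max (max (2 * (C₂ * Cζ) / δ) (A T * (T : ℝ) ^ (b - a))) 0
  refine exists_pos_le_div_of_eventually hv (le_supersolution_of_linear_recurrence
    (u := fun t => C / (t : ℝ) ^ (b - a)) (fun t ht => ?_) (fun t ht => hrec t (hT t ht).1)
    (fun t ht => ?_) ?_)
  · have hη : Cη / (t : ℝ) ^ a ≤ 1 := div_le_one_of_le₀ (hT t ht).2.1 (by positivity)
    nlinarith [sq_nonneg (Cη / (t : ℝ) ^ a)]
  · obtain ⟨ht1, -, hsmall⟩ := hT t ht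
    have := recurrence_step_le_div_rpow (K := C₂ * Cζ) (C := C) (x := t) ha1 hc
      (by exact_mod_cast ht1) (le_max_right _ _) (by rwa [div_le_iff₀' hδ] at hsmall)
      (by rw [← div_le_iff₀' hδ]; exact (le_max_left _ _).trans (le_max_left _ _))
    rw [mul_div_assoc] at this
    push_cast
    exact this
  · rw [le_div_iff₀ (hv T (hT T le_rfl).1)]
    exact (le_max_right _ _).trans (le_max_left _ _)

/-- Lemma 3: decay estimate for sequences satisfying a linear one-step recurrence
with polynomially decaying contraction factor `η_t = C_η/t^a` and forcing `ζ_t = C_ζ/t^b`. -/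
theorem stmt_1 (C₁ C₂ Cζ Cη a b : ℝ)
    (hC₁ : 0 ≤ C₁) (hC₂ : 0 ≤ C₂) (hCζ : 0 < Cζ) (hCη : 0 < Cη)
    (ha0 : 0 < a) (ha1 : a ≤ 1)
    (hCη' : 1 + b - a < Cη) (hba : (b - a) ∉ Set.Icc (-1 : ℝ) 0)
    (A : ℕ → ℝ) (hA : ∀ t : ℕ, 1 ≤ t → 0 ≤ A t)
    (hrec : ∀ t : ℕ, 1 ≤ t →
      A (t + 1) ≤ (1 - Cη / (t : ℝ) ^ a + C₁ * (Cη / (t : ℝ) ^ a) ^ 2) * A t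
        + C₂ * (Cζ / (t : ℝ) ^ b)) :
    ∃ C_A : ℝ, 0 < C_A ∧ ∀ t : ℕ, 1 ≤ t → A t ≤ C_A / (t : ℝ) ^ (b - a) :=
  stmt_1_general C₁ C₂ Cζ Cη a b hC₁ hCη ha0 ha1 hCη' hba A hrec
end

section
/- Let g : ℝ^p → ℝ^q be differentiable with derivative Dg Lipschitz of constant L ≥ 0 (in operator norm). Let θ_0, …, θ_t be nonnegative reals with ∑_{j=0}^t θ_j = 1, points z_0, …, z_t ∈ ℝ^p with x̄ = ∑_{j=0}^t θ_j z_j, and arbitrary vectors u_0, …, u_t ∈ ℝ^q with y = ∑_{j=0}^t θ_j u_j. Then ‖g(x̄) − y‖² ≤ (L²/2) (∑_{j=0}^t θ_j ‖z_j − x̄‖²)² + 2 ‖∑_{j=0}^t θ_j (u_j − g(z_j))‖². -/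
/-!
Write `R_j = g z_j - g x̄ - Dg(x̄)(z_j - x̄)` for the first-order Taylor remainders. Since the
weights sum to one and `x̄` is their barycentre, `∑ θ_j Dg(x̄)(z_j - x̄) = 0`, so
`y - g x̄ = ∑ θ_j (u_j - g z_j) + ∑ θ_j R_j`. A Lipschitz derivative gives `‖R_j‖ ≤ L/2 ‖z_j - x̄‖²`,
hence `‖g x̄ - y‖ ≤ ‖ℰ‖ + L/2 𝒟`, and `(a + b)² ≤ 2a² + 2b²` finishes.
-/

open Finset Set

theorem norm_image_sub_sub_fderiv_apply_le {E F : Type*} [NormedAddCommGroup E] [NormedSpace ℝ E]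
    [NormedAddCommGroup F] [NormedSpace ℝ F] {g : E → F} (hg : Differentiable ℝ g) {L : ℝ}
    {a : E} (hLip : ∀ x, ‖fderiv ℝ g x - fderiv ℝ g a‖ ≤ L * ‖x - a‖) (b : E) :
    ‖g b - g a - fderiv ℝ g a (b - a)‖ ≤ L / 2 * ‖b - a‖ ^ 2 := by
  set v := b - a
  -- Fence `φ` on `[0, 1]` by `s ↦ L/2 ‖v‖² s²`, whose derivative dominates `‖φ'‖`.
  set φ : ℝ → F := fun s => g (a + s • v) - g a - s • fderiv ℝ g a v
  have hφ : ∀ s, HasDerivAt φ ((fderiv ℝ g (a + s • v) - fderiv ℝ g a) v) s := by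
    intro s
    have hline : HasDerivAt (fun s : ℝ => a + s • v) v s := by
      simpa using ((hasDerivAt_id s).smul_const v).const_add a
    rw [sub_apply, ← one_smul ℝ (fderiv ℝ g a v)]
    exact (((hg _).hasFDerivAt.comp_hasDerivAt s hline).sub_const (g a)).sub
      ((hasDerivAt_id s).smul_const (fderiv ℝ g a v))
  have hB : ∀ s, HasDerivAt (fun s => L / 2 * ‖v‖ ^ 2 * s ^ 2) (L * ‖v‖ ^ 2 * s) s := fun s =>
    ((hasDerivAt_pow 2 s).const_mul (L / 2 * ‖v‖ ^ 2)).congr_deriv (by norm_num; ring)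
  have hbound : ∀ s ∈ Ico (0 : ℝ) 1,
      ‖(fderiv ℝ g (a + s • v) - fderiv ℝ g a) v‖ ≤ L * ‖v‖ ^ 2 * s := by
    intro s hs
    calc ‖(fderiv ℝ g (a + s • v) - fderiv ℝ g a) v‖
        ≤ ‖fderiv ℝ g (a + s • v) - fderiv ℝ g a‖ * ‖v‖ := ContinuousLinearMap.le_opNorm _ _
      _ ≤ L * ‖a + s • v - a‖ * ‖v‖ := by gcongr; exact hLip _
      _ = L * ‖v‖ ^ 2 * s := by
        rw [add_sub_cancel_left, norm_smul, Real.norm_of_nonneg hs.1]; ring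
  have hfence := image_norm_le_of_norm_deriv_right_le_deriv_boundary
    (fun s _ => (hφ s).continuousAt.continuousWithinAt) (fun s _ => (hφ s).hasDerivWithinAt)
    (by simp [φ]) hB hbound (right_mem_Icc.2 zero_le_one)
  simpa [φ, v] using hfence

theorem sum_smul_sub_eq_sum_smul_add_sum_smul_of_sum_eq_one {ι R E F : Type*} [Ring R]
    [AddCommGroup E] [Module R E] [AddCommGroup F] [Module R F]
    (f : E → F) (D : E →ₗ[R] F) {s : Finset ι} {w : ι → R} (hw : ∑ i ∈ s, w i = 1)
    {z : ι → E} {x : E} (hx : ∑ i ∈ s, w i • z i = x) (u : ι → F) :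
    ∑ i ∈ s, w i • u i - f x =
      ∑ i ∈ s, w i • (u i - f (z i)) + ∑ i ∈ s, w i • (f (z i) - f x - D (z i - x)) := by
  have hlinear : ∑ i ∈ s, w i • D (z i - x) = 0 := by
    simp only [← map_smul, ← map_sum, smul_sub, sum_sub_distrib, ← sum_smul, hw, one_smul, hx,
      sub_self, map_zero]
  have hsplit : ∀ i, u i - f (z i) + (f (z i) - f x - D (z i - x)) = u i - f x - D (z i - x) :=
    fun i => by abel
  rw [← sum_add_distrib]
  simp only [← smul_add, hsplit]
  simp only [smul_sub, sum_sub_distrib, ← sum_smul, hw, one_smul, hlinear, sub_zero]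

theorem stmt_5_general (p q : ℕ) (L : ℝ)
    (g : EuclideanSpace ℝ (Fin p) → EuclideanSpace ℝ (Fin q))
    (hg : Differentiable ℝ g)
    (hLip : ∀ x y : EuclideanSpace ℝ (Fin p),
      ‖fderiv ℝ g x - fderiv ℝ g y‖ ≤ L * ‖x - y‖)
    (t : ℕ) (θ : ℕ → ℝ) (hθ : ∀ j ∈ Finset.range (t + 1), 0 ≤ θ j)
    (hsum : ∑ j ∈ Finset.range (t + 1), θ j = 1)
    (z : ℕ → EuclideanSpace ℝ (Fin p)) (u : ℕ → EuclideanSpace ℝ (Fin q))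
    (xbar : EuclideanSpace ℝ (Fin p))
    (hxbar : xbar = ∑ j ∈ Finset.range (t + 1), θ j • z j)
    (y : EuclideanSpace ℝ (Fin q))
    (hy : y = ∑ j ∈ Finset.range (t + 1), θ j • u j) :
    ‖g xbar - y‖ ^ 2 ≤
      (L ^ 2 / 2) * (∑ j ∈ Finset.range (t + 1), θ j * ‖z j - xbar‖ ^ 2) ^ 2
        + 2 * ‖∑ j ∈ Finset.range (t + 1), θ j • (u j - g (z j))‖ ^ 2 := by
  set s := range (t + 1)
  set 𝒟 := ∑ j ∈ s, θ j * ‖z j - xbar‖ ^ 2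
  set ℰ := ∑ j ∈ s, θ j • (u j - g (z j))
  have hdecomp := sum_smul_sub_eq_sum_smul_add_sum_smul_of_sum_eq_one g
    (fderiv ℝ g xbar).toLinearMap hsum hxbar.symm u
  have hremainder :
      ‖∑ j ∈ s, θ j • (g (z j) - g xbar - fderiv ℝ g xbar (z j - xbar))‖ ≤ L / 2 * 𝒟 := by
    rw [mul_sum]
    refine norm_sum_le_of_le _ fun j hj => ?_
    rw [norm_smul, Real.norm_of_nonneg (hθ j hj), mul_left_comm]
    exact mul_le_mul_of_nonneg_left
      (norm_image_sub_sub_fderiv_apply_le hg (fun x => hLip x xbar) (z j)) (hθ j hj)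
  have htriangle : ‖g xbar - y‖ ≤ ‖ℰ‖ + L / 2 * 𝒟 := by
    rw [norm_sub_rev, hy, hdecomp]
    exact (norm_add_le _ _).trans (add_le_add le_rfl hremainder)
  calc ‖g xbar - y‖ ^ 2 ≤ (‖ℰ‖ + L / 2 * 𝒟) ^ 2 := pow_le_pow_left₀ (norm_nonneg _) htriangle 2
    _ ≤ 2 * (‖ℰ‖ ^ 2 + (L / 2 * 𝒟) ^ 2) := add_sq_le
    _ = L ^ 2 / 2 * 𝒟 ^ 2 + 2 * ‖ℰ‖ ^ 2 := by ring

/-- Central deterministic inequality in the proof of Lemma 2: the squared tracking error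
between `g` at a convex combination of points and a convex combination of estimates. -/
theorem stmt_5 (p q : ℕ) (L : ℝ) (hL : 0 ≤ L)
    (g : EuclideanSpace ℝ (Fin p) → EuclideanSpace ℝ (Fin q))
    (hg : Differentiable ℝ g)
    (hLip : ∀ x y : EuclideanSpace ℝ (Fin p),
      ‖fderiv ℝ g x - fderiv ℝ g y‖ ≤ L * ‖x - y‖)
    (t : ℕ) (θ : ℕ → ℝ) (hθ : ∀ j ∈ Finset.range (t + 1), 0 ≤ θ j)
    (hsum : ∑ j ∈ Finset.range (t + 1), θ j = 1)
    (z : ℕ → EuclideanSpace ℝ (Fin p)) (u : ℕ → EuclideanSpace ℝ (Fin q))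
    (xbar : EuclideanSpace ℝ (Fin p))
    (hxbar : xbar = ∑ j ∈ Finset.range (t + 1), θ j • z j)
    (y : EuclideanSpace ℝ (Fin q))
    (hy : y = ∑ j ∈ Finset.range (t + 1), θ j • u j) :
    ‖g xbar - y‖ ^ 2 ≤
      (L ^ 2 / 2) * (∑ j ∈ Finset.range (t + 1), θ j * ‖z j - xbar‖ ^ 2) ^ 2
        + 2 * ‖∑ j ∈ Finset.range (t + 1), θ j • (u j - g (z j))‖ ^ 2 :=
  stmt_5_general p q L g hg hLip t θ hθ hsum z u xbar hxbar y hy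
end

section
/- Given a real sequence (β_t)_{t≥0} with β₀ = 1 and β_t ∈ (0, 1] for t ≥ 1, define for 0 ≤ j ≤ t the weights θ_j^{(t)} = β_j ∏_{i=j+1}^{t} (1 − β_i), with θ_t^{(t)} = β_t. Let (z_t)_{t≥1} ⊂ ℝ^p and define x₁ = z₁ and x_{t+1} = (1 − β_t) x_t + β_t z_{t+1} for t ≥ 1. Set 𝒟_t = ∑_{j=0}^{t−1} θ_j^{(t−1)} ‖z_{j+1} − x_t‖² and ℱ_t = ∑_{j=0}^{t−1} θ_j^{(t−1)} ‖x_t − z_{j+1}‖. Then for every t ≥ 1: 𝒟_{t+1} ≤ (1 − β_t) 𝒟_t + (2/β_t) ‖x_{t+1} − x_t‖² + β_t ℱ_t². -/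
/-!
Split off the newest point: passing from `t - 1` to `t` multiplies the old weights by `1 - β_t`
and gives `z_{t+1}` the weight `β_t`. The old points are re-centred from `x_t` to `x_{t+1}` with
the triangle inequality, while `z_{t+1}` lies at distance `((1 - β_t) / β_t) ‖x_{t+1} - x_t‖` from
`x_{t+1}`; what remains is a scalar inequality, essentially `2 β F d ≤ β² F² + d²`.
-/

open Finset

/-- The paper's weight `θ_j^{(t)}`. -/
def averagingWeight (β : ℕ → ℝ) (t j : ℕ) : ℝ :=
  β j * ∏ i ∈ Ioc j t, (1 - β i)

lemma sum_averagingWeight_succ (β : ℕ → ℝ) (f : ℕ → ℝ) (t : ℕ) :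
    ∑ j ∈ range (t + 2), averagingWeight β (t + 1) j * f j =
      (1 - β (t + 1)) * ∑ j ∈ range (t + 1), averagingWeight β t j * f j
        + β (t + 1) * f (t + 1) := by
  rw [sum_range_succ, mul_sum]
  congr 1
  · refine sum_congr rfl fun j hj => ?_
    rw [averagingWeight, averagingWeight,
      prod_Ioc_succ_top (Nat.lt_succ_iff.mp (mem_range.mp hj))]
    ring
  · simp [averagingWeight]

lemma sum_averagingWeight_eq_one {β : ℕ → ℝ} (hβ0 : β 0 = 1) (t : ℕ) :
    ∑ j ∈ range (t + 1), averagingWeight β t j = 1 := by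
  induction t with
  | zero => simp [averagingWeight, hβ0]
  | succ t ih =>
    simpa [ih] using sum_averagingWeight_succ β (fun _ => 1) t

lemma averagingWeight_nonneg {β : ℕ → ℝ} (hβ : ∀ i, 0 ≤ β i ∧ β i ≤ 1) (t j : ℕ) :
    0 ≤ averagingWeight β t j :=
  mul_nonneg (hβ j).1 <| prod_nonneg fun i _ => sub_nonneg.mpr (hβ i).2

lemma sum_mul_norm_sub_sq_le {E ι : Type*} [SeminormedAddCommGroup E] (s : Finset ι)
    {w : ι → ℝ} (hw : ∀ j ∈ s, 0 ≤ w j) (hw1 : ∑ j ∈ s, w j = 1) (y : ι → E) (c c' : E) :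
    ∑ j ∈ s, w j * ‖y j - c'‖ ^ 2 ≤
      ∑ j ∈ s, w j * ‖y j - c‖ ^ 2
        + 2 * (∑ j ∈ s, w j * ‖c - y j‖) * ‖c' - c‖ + ‖c' - c‖ ^ 2 := by
  calc ∑ j ∈ s, w j * ‖y j - c'‖ ^ 2
      ≤ ∑ j ∈ s, w j * (‖y j - c‖ + ‖c' - c‖) ^ 2 := by
        gcongr with j hj
        · exact hw j hj
        · simpa only [norm_sub_rev c c'] using norm_sub_le_norm_sub_add_norm_sub (y j) c c'
    _ = ∑ j ∈ s, (w j * ‖y j - c‖ ^ 2 + 2 * (w j * ‖c - y j‖) * ‖c' - c‖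
          + w j * ‖c' - c‖ ^ 2) :=
        sum_congr rfl fun j _ => by rw [norm_sub_rev c (y j)]; ring
    _ = _ := by
        rw [sum_add_distrib, sum_add_distrib, ← sum_mul, ← mul_sum, ← sum_mul, hw1, one_mul]

lemma norm_sub_eq_of_eq_smul_add_smul {E : Type*} [NormedAddCommGroup E] [NormedSpace ℝ E]
    {b : ℝ} (hb0 : 0 < b) (hb1 : b ≤ 1) {x x' z : E}
    (h : x' = (1 - b) • x + b • z) :
    ‖z - x'‖ = (1 - b) / b * ‖x' - x‖ := by
  have hzx : z - x' = ((1 - b) / b) • (x' - x) := by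
    have hstep : x' - x = b • (z - x) := by rw [h]; module
    rw [hstep, smul_smul, div_mul_cancel₀ _ hb0.ne', h]
    module
  rw [hzx, norm_smul, Real.norm_of_nonneg (div_nonneg (sub_nonneg.mpr hb1) hb0.le)]

/-- The gap is `((1 - b) (b F - d) ^ 2 + b ^ 3 F ^ 2 + 2 b d ^ 2) / b`. -/
lemma one_sub_mul_add_mul_div_sq_le {b : ℝ} (hb0 : 0 < b) (hb1 : b ≤ 1) (d F : ℝ) :
    (1 - b) * (2 * F * d + d ^ 2) + b * ((1 - b) / b * d) ^ 2 ≤ 2 / b * d ^ 2 + b * F ^ 2 := by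
  have hgap :
      2 / b * d ^ 2 + b * F ^ 2 - ((1 - b) * (2 * F * d + d ^ 2) + b * ((1 - b) / b * d) ^ 2)
      = ((1 - b) * (b * F - d) ^ 2 + b ^ 3 * F ^ 2 + 2 * b * d ^ 2) / b := by
    field_simp
    ring
  rw [← sub_nonneg, hgap]
  have := sub_nonneg.mpr hb1
  positivity

theorem stmt_6_general (p : ℕ) (β : ℕ → ℝ) (hβ0 : β 0 = 1)
    (hβ : ∀ t : ℕ, 1 ≤ t → 0 < β t ∧ β t ≤ 1)
    (z x : ℕ → EuclideanSpace ℝ (Fin p))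
    (hxrec : ∀ t : ℕ, 1 ≤ t → x (t + 1) = (1 - β t) • x t + β t • z (t + 1))
    (t : ℕ) (ht : 1 ≤ t) :
    (∑ j ∈ Finset.range (t + 1),
        (β j * ∏ i ∈ Finset.Ioc j t, (1 - β i)) * ‖z (j + 1) - x (t + 1)‖ ^ 2) ≤
      (1 - β t) * (∑ j ∈ Finset.range t,
          (β j * ∏ i ∈ Finset.Ioc j (t - 1), (1 - β i)) * ‖z (j + 1) - x t‖ ^ 2)
        + (2 / β t) * ‖x (t + 1) - x t‖ ^ 2
        + β t * (∑ j ∈ Finset.range t,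
            (β j * ∏ i ∈ Finset.Ioc j (t - 1), (1 - β i)) * ‖x t - z (j + 1)‖) ^ 2 := by
  obtain ⟨n, rfl⟩ := Nat.exists_eq_add_of_le' ht
  rw [Nat.add_sub_cancel]
  obtain ⟨hb0, hb1⟩ := hβ (n + 1) ht
  have hβIcc : ∀ i, 0 ≤ β i ∧ β i ≤ 1 := fun
    | 0 => by simp [hβ0]
    | i + 1 => ⟨(hβ (i + 1) (by omega)).1.le, (hβ (i + 1) (by omega)).2⟩
  have hlast := norm_sub_eq_of_eq_smul_add_smul hb0 hb1 (hxrec (n + 1) ht)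
  have hshift := sum_mul_norm_sub_sq_le (range (n + 1))
    (fun j _ => averagingWeight_nonneg hβIcc n j) (sum_averagingWeight_eq_one hβ0 n)
    (fun j => z (j + 1)) (x (n + 1)) (x (n + 1 + 1))
  change ∑ j ∈ range (n + 2), averagingWeight β (n + 1) j * ‖z (j + 1) - x (n + 1 + 1)‖ ^ 2
    ≤ _
  rw [sum_averagingWeight_succ, hlast]
  set d := ‖x (n + 1 + 1) - x (n + 1)‖
  simp only [averagingWeight] at hshift ⊢
  linarith [mul_le_mul_of_nonneg_left hshift (sub_nonneg.mpr hb1),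
    one_sub_mul_add_mul_div_sq_le hb0 hb1 d
      (∑ j ∈ range (n + 1), (β j * ∏ i ∈ Ioc j n, (1 - β i)) * ‖x (n + 1) - z (j + 1)‖)]

/-- Recurrence for the weighted squared dispersion `𝒟_t` of the auxiliary points
`z_{j+1}` around the averaged iterate `x_t` (proof of Lemma 2). -/
theorem stmt_6 (p : ℕ) (β : ℕ → ℝ) (hβ0 : β 0 = 1)
    (hβ : ∀ t : ℕ, 1 ≤ t → 0 < β t ∧ β t ≤ 1)
    (z x : ℕ → EuclideanSpace ℝ (Fin p))
    (hx1 : x 1 = z 1)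
    (hxrec : ∀ t : ℕ, 1 ≤ t → x (t + 1) = (1 - β t) • x t + β t • z (t + 1))
    (t : ℕ) (ht : 1 ≤ t) :
    (∑ j ∈ Finset.range (t + 1),
        (β j * ∏ i ∈ Finset.Ioc j t, (1 - β i)) * ‖z (j + 1) - x (t + 1)‖ ^ 2) ≤
      (1 - β t) * (∑ j ∈ Finset.range t,
          (β j * ∏ i ∈ Finset.Ioc j (t - 1), (1 - β i)) * ‖z (j + 1) - x t‖ ^ 2)
        + (2 / β t) * ‖x (t + 1) - x t‖ ^ 2
        + β t * (∑ j ∈ Finset.range t,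
            (β j * ∏ i ∈ Finset.Ioc j (t - 1), (1 - β i)) * ‖x t - z (j + 1)‖) ^ 2 :=
  stmt_6_general p β hβ0 hβ z x hxrec t ht
end

section
/- Given a real sequence (β_t)_{t≥0} with β₀ = 1 and β_t ∈ (0, 1] for t ≥ 1, define for 0 ≤ j ≤ t the weights θ_j^{(t)} = β_j ∏_{i=j+1}^{t} (1 − β_i), with θ_t^{(t)} = β_t. Let (z_t)_{t≥1} ⊂ ℝ^p and define x₁ = z₁ and x_{t+1} = (1 − β_t) x_t + β_t z_{t+1} for t ≥ 1. Set ℱ_t = ∑_{j=0}^{t−1} θ_j^{(t−1)} ‖x_t − z_{j+1}‖. Then for every t ≥ 2: ℱ_t ≤ (1 − β_{t−1})(ℱ_{t−1} + 2‖x_t − x_{t−1}‖), and consequently ℱ_t² ≤ (1 − β_{t−1}) ℱ_{t−1}² + (4/β_{t−1}) ‖x_t − x_{t−1}‖². -/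
/-! The new weights are the old ones damped by `1 - β_{t-1}`, plus the fresh weight
`β_{t-1}` on `z_t`. Moving the centre from `x_{t-1}` to `x_t` changes each distance by at most
`‖x_t - x_{t-1}‖`, and since `x_t` is a convex combination of `x_{t-1}` and `z_t`, the fresh
term `β_{t-1}‖x_t - z_t‖` equals `(1 - β_{t-1})‖x_t - x_{t-1}‖`; as the old weights sum to one,
this gives the linear recurrence. The squared form follows from
`(a + c)² ≤ (1 + β) a² + (1 + 1/β) c²`. -/

open Finset

/-- The paper's `θ_j^{(s)}`. -/
noncomputable def avgWeight (β : ℕ → ℝ) (s j : ℕ) : ℝ :=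
  β j * ∏ i ∈ Ioc j s, (1 - β i)

/-- `dispersion β z (t - 1) (x t)` is the paper's `ℱ_t`. -/
noncomputable def dispersion {E : Type*} [NormedAddCommGroup E] (β : ℕ → ℝ) (z : ℕ → E)
    (s : ℕ) (y : E) : ℝ :=
  ∑ j ∈ range (s + 1), avgWeight β s j * ‖y - z (j + 1)‖

section Weights

variable (β : ℕ → ℝ)

lemma avgWeight_self (s : ℕ) : avgWeight β s s = β s := by
  simp [avgWeight]

lemma avgWeight_succ {s j : ℕ} (hj : j ≤ s) :
    avgWeight β (s + 1) j = (1 - β (s + 1)) * avgWeight β s j := by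
  rw [avgWeight, avgWeight, prod_Ioc_succ_top hj]
  ring

lemma sum_avgWeight (h0 : β 0 = 1) (s : ℕ) : ∑ j ∈ range (s + 1), avgWeight β s j = 1 := by
  induction s with
  | zero => simp [avgWeight, h0]
  | succ s ih =>
    rw [sum_range_succ,
      sum_congr rfl fun j hj => avgWeight_succ β (mem_range_succ_iff.mp hj), ← mul_sum, ih,
      avgWeight_self]
    ring

lemma avgWeight_nonneg (hβ : ∀ i, 0 ≤ β i ∧ β i ≤ 1) (s j : ℕ) : 0 ≤ avgWeight β s j :=
  mul_nonneg (hβ j).1 (prod_nonneg fun i _ => sub_nonneg.2 (hβ i).2)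

end Weights

section Dispersion

variable {E : Type*} [NormedAddCommGroup E] (β : ℕ → ℝ) (z : ℕ → E)

lemma dispersion_succ (s : ℕ) (y : E) :
    dispersion β z (s + 1) y
      = (1 - β (s + 1)) * dispersion β z s y + β (s + 1) * ‖y - z (s + 2)‖ := by
  rw [dispersion, sum_range_succ, avgWeight_self,
    sum_congr rfl fun j hj => by rw [avgWeight_succ β (mem_range_succ_iff.mp hj), mul_assoc],
    ← mul_sum, dispersion]

lemma dispersion_le_add_norm_sub (h0 : β 0 = 1) (hβ : ∀ i, 0 ≤ β i ∧ β i ≤ 1) (s : ℕ)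
    (y y' : E) : dispersion β z s y' ≤ dispersion β z s y + ‖y' - y‖ :=
  calc dispersion β z s y'
      ≤ ∑ j ∈ range (s + 1), avgWeight β s j * (‖y - z (j + 1)‖ + ‖y' - y‖) :=
        sum_le_sum fun j _ => mul_le_mul_of_nonneg_left
          ((norm_sub_le_norm_sub_add_norm_sub y' y _).trans_eq (add_comm _ _))
          (avgWeight_nonneg β hβ s j)
    _ = dispersion β z s y + ‖y' - y‖ := by
        simp only [mul_add, sum_add_distrib, ← sum_mul, sum_avgWeight β h0, one_mul, dispersion]

end Dispersion

lemma mul_norm_sub_eq_of_eq_convexComb {E : Type*} [NormedAddCommGroup E] [NormedSpace ℝ E]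
    {b : ℝ} (hb0 : 0 ≤ b) (hb1 : b ≤ 1) {y w y' : E} (h : y' = (1 - b) • y + b • w) :
    b * ‖y' - w‖ = (1 - b) * ‖y' - y‖ := by
  have hw : y' - w = (1 - b) • (y - w) := by rw [h]; module
  have hy : y' - y = b • (w - y) := by rw [h]; module
  rw [hw, hy, norm_smul, norm_smul, Real.norm_of_nonneg hb0, Real.norm_of_nonneg (sub_nonneg.2 hb1),
    norm_sub_rev w]
  ring

theorem dispersion_succ_le {E : Type*} [NormedAddCommGroup E] [NormedSpace ℝ E] (β : ℕ → ℝ)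
    (z : ℕ → E) (h0 : β 0 = 1) (hβ : ∀ i, 0 ≤ β i ∧ β i ≤ 1) (s : ℕ) {y y' : E}
    (hy' : y' = (1 - β (s + 1)) • y + β (s + 1) • z (s + 2)) :
    dispersion β z (s + 1) y' ≤ (1 - β (s + 1)) * (dispersion β z s y + 2 * ‖y' - y‖) := by
  have hfresh := mul_norm_sub_eq_of_eq_convexComb (hβ (s + 1)).1 (hβ (s + 1)).2 hy'
  have hmove := dispersion_le_add_norm_sub β z h0 hβ s y y'
  have hdamp : 0 ≤ 1 - β (s + 1) := sub_nonneg.2 (hβ (s + 1)).2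
  rw [dispersion_succ, hfresh]
  nlinarith

lemma add_sq_le_one_add_mul_sq {α : ℝ} (hα : 0 < α) (a c : ℝ) :
    (a + c) ^ 2 ≤ (1 + α) * a ^ 2 + (1 + 1 / α) * c ^ 2 := by
  have key : (1 + α) * a ^ 2 + (1 + 1 / α) * c ^ 2 - (a + c) ^ 2 = (α * a - c) ^ 2 / α := by
    field_simp
    ring
  nlinarith [div_nonneg (sq_nonneg (α * a - c)) hα.le]

lemma sq_le_of_le_one_sub_mul {b F D G : ℝ} (hb0 : 0 < b) (hb1 : b ≤ 1) (hG : 0 ≤ G)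
    (h : G ≤ (1 - b) * (F + 2 * D)) : G ^ 2 ≤ (1 - b) * F ^ 2 + 4 / b * D ^ 2 := by
  have hdamp : 0 ≤ 1 - b := sub_nonneg.2 hb1
  have hF : (1 + b) * (1 - b) ^ 2 ≤ 1 - b := by nlinarith [mul_nonneg hdamp (sq_nonneg b)]
  have hD : (1 + 1 / b) * (1 - b) ^ 2 ≤ 1 / b := by
    rw [one_add_div hb0.ne', div_mul_eq_mul_div]
    gcongr
    nlinarith
  calc G ^ 2 ≤ (1 - b) ^ 2 * (F + 2 * D) ^ 2 := by rw [← mul_pow]; gcongr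
    _ ≤ (1 - b) ^ 2 * ((1 + b) * F ^ 2 + (1 + 1 / b) * (2 * D) ^ 2) := by
        gcongr; exact add_sq_le_one_add_mul_sq hb0 F (2 * D)
    _ = ((1 + b) * (1 - b) ^ 2) * F ^ 2 + ((1 + 1 / b) * (1 - b) ^ 2) * (4 * D ^ 2) := by ring
    _ ≤ (1 - b) * F ^ 2 + 1 / b * (4 * D ^ 2) := by gcongr
    _ = (1 - b) * F ^ 2 + 4 / b * D ^ 2 := by ring

theorem stmt_7_general (p : ℕ) (β : ℕ → ℝ) (hβ0 : β 0 = 1)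
    (hβ : ∀ t : ℕ, 1 ≤ t → 0 < β t ∧ β t ≤ 1)
    (z x : ℕ → EuclideanSpace ℝ (Fin p))
    (hxrec : ∀ t : ℕ, 1 ≤ t → x (t + 1) = (1 - β t) • x t + β t • z (t + 1))
    (t : ℕ) (ht : 2 ≤ t) :
    (∑ j ∈ Finset.range t,
        (β j * ∏ i ∈ Finset.Ioc j (t - 1), (1 - β i)) * ‖x t - z (j + 1)‖) ≤
      (1 - β (t - 1)) *
        ((∑ j ∈ Finset.range (t - 1),
            (β j * ∏ i ∈ Finset.Ioc j (t - 2), (1 - β i)) * ‖x (t - 1) - z (j + 1)‖)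
          + 2 * ‖x t - x (t - 1)‖) ∧
    (∑ j ∈ Finset.range t,
        (β j * ∏ i ∈ Finset.Ioc j (t - 1), (1 - β i)) * ‖x t - z (j + 1)‖) ^ 2 ≤
      (1 - β (t - 1)) *
          (∑ j ∈ Finset.range (t - 1),
              (β j * ∏ i ∈ Finset.Ioc j (t - 2), (1 - β i)) * ‖x (t - 1) - z (j + 1)‖) ^ 2
        + (4 / β (t - 1)) * ‖x t - x (t - 1)‖ ^ 2 := by
  obtain ⟨s, rfl⟩ : ∃ s, t = s + 2 := ⟨t - 2, by omega⟩
  have hβ' : ∀ i, 0 ≤ β i ∧ β i ≤ 1 := fun i => by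
    rcases Nat.eq_zero_or_pos i with rfl | hi
    · simp [hβ0]
    · exact ⟨(hβ i hi).1.le, (hβ i hi).2⟩
  have hrec := dispersion_succ_le β z hβ0 hβ' s (hxrec (s + 1) (by omega))
  change dispersion β z (s + 1) (x (s + 2))
      ≤ (1 - β (s + 1)) * (dispersion β z s (x (s + 1)) + 2 * ‖x (s + 2) - x (s + 1)‖) ∧
    dispersion β z (s + 1) (x (s + 2)) ^ 2
      ≤ (1 - β (s + 1)) * dispersion β z s (x (s + 1)) ^ 2
        + 4 / β (s + 1) * ‖x (s + 2) - x (s + 1)‖ ^ 2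
  exact ⟨hrec, sq_le_of_le_one_sub_mul (hβ (s + 1) (by omega)).1 (hβ' (s + 1)).2
    (sum_nonneg fun j _ => mul_nonneg (avgWeight_nonneg β hβ' _ j) (norm_nonneg _)) hrec⟩

/-- Recurrence for the weighted first-moment dispersion `ℱ_t` of the auxiliary points
around the averaged iterate (proof of Lemma 2), with its squared form. -/
theorem stmt_7 (p : ℕ) (β : ℕ → ℝ) (hβ0 : β 0 = 1)
    (hβ : ∀ t : ℕ, 1 ≤ t → 0 < β t ∧ β t ≤ 1)
    (z x : ℕ → EuclideanSpace ℝ (Fin p))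
    (hx1 : x 1 = z 1)
    (hxrec : ∀ t : ℕ, 1 ≤ t → x (t + 1) = (1 - β t) • x t + β t • z (t + 1))
    (t : ℕ) (ht : 2 ≤ t) :
    (∑ j ∈ Finset.range t,
        (β j * ∏ i ∈ Finset.Ioc j (t - 1), (1 - β i)) * ‖x t - z (j + 1)‖) ≤
      (1 - β (t - 1)) *
        ((∑ j ∈ Finset.range (t - 1),
            (β j * ∏ i ∈ Finset.Ioc j (t - 2), (1 - β i)) * ‖x (t - 1) - z (j + 1)‖)
          + 2 * ‖x t - x (t - 1)‖) ∧
    (∑ j ∈ Finset.range t,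
        (β j * ∏ i ∈ Finset.Ioc j (t - 1), (1 - β i)) * ‖x t - z (j + 1)‖) ^ 2 ≤
      (1 - β (t - 1)) *
          (∑ j ∈ Finset.range (t - 1),
              (β j * ∏ i ∈ Finset.Ioc j (t - 2), (1 - β i)) * ‖x (t - 1) - z (j + 1)‖) ^ 2
        + (4 / β (t - 1)) * ‖x t - x (t - 1)‖ ^ 2 :=
  stmt_7_general p β hβ0 hβ z x hxrec t ht
end

section
/- Let C_β, σ, C₃ > 0, 0 < b ≤ 1, and e > 0 with 2C_β > 1 + b + e. If (u_t)_{t≥1} is a sequence of nonnegative reals satisfying u_{t+1} ≤ (1 − C_β/t^b)² u_t + (C_β² σ² / C₃) t^{−(2b+e)} for all t ≥ 1, then there exists a constant C > 0 such that u_t ≤ C / t^{b+e} for all t ≥ 1. -/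
/-!
Write `x = t^(-b)`, so that `x ≥ 1/t` because `b ≤ 1`. Once `t` is so large that `2β²x ≤ 2β - (1 + a)`,
and for every `C ≥ 2K / (2β - (1 + a))`, one step of the recurrence takes the bound `C t^(-a)` to
`((1 - βx)² C + K x) t^(-a) ≤ (1 - (1 + a) x) C t^(-a)`. By Bernoulli's inequality
`(1 - (1 + a)/t) t^(-a) ≤ (t + 1)^(-a)`, so the bound passes from `t` to `t + 1`. Enlarging `C` to
cover the finitely many terms before that threshold finishes the induction.
-/
open Filter Real

theorem one_sub_div_le_div_add_one_rpow {a t : ℝ} (ht : 0 < t) (ha : 0 ≤ a) :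
    1 - (1 + a) / t ≤ (t / (t + 1)) ^ a := by
  have hs : -1 ≤ -(1 / (t + 1)) := by
    rw [neg_le_neg_iff, div_le_one (by linarith)]; linarith
  calc 1 - (1 + a) / t ≤ 1 + (1 + a) * -(1 / (t + 1)) := by
        have : (1 + a) / (t + 1) ≤ (1 + a) / t := by gcongr; linarith
        linarith [mul_one_div (1 + a) (t + 1)]
    _ ≤ (1 + -(1 / (t + 1))) ^ (1 + a) := one_add_mul_self_le_rpow_one_add hs (by linarith)
    _ = (t / (t + 1)) ^ (1 + a) := by congr 1; field_simp; ring
    _ ≤ (t / (t + 1)) ^ a :=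
        rpow_le_rpow_of_exponent_ge (by positivity) (by rw [div_le_one (by linarith)]; linarith)
          (by linarith)

theorem one_sub_mul_rpow_neg_div_rpow_le {a b t : ℝ} (ht : 1 ≤ t) (ha : 0 ≤ a) (hb : b ≤ 1) :
    (1 - (1 + a) * t ^ (-b)) / t ^ a ≤ 1 / (t + 1) ^ a := by
  have ht0 : 0 < t := by linarith
  have hinv : t⁻¹ ≤ t ^ (-b) := by
    rw [← rpow_neg_one]; exact rpow_le_rpow_of_exponent_le ht (by linarith)
  have hbern : 1 - (1 + a) * t ^ (-b) ≤ t ^ a / (t + 1) ^ a := by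
    rw [← div_rpow ht0.le (by linarith)]
    refine le_trans ?_ (one_sub_div_le_div_add_one_rpow ht0 ha)
    rw [div_eq_mul_inv]
    gcongr
  calc (1 - (1 + a) * t ^ (-b)) / t ^ a ≤ t ^ a / (t + 1) ^ a / t ^ a := by gcongr
    _ = 1 / (t + 1) ^ a := by field_simp

theorem sq_one_sub_mul_mul_add_le {β K C m x : ℝ} (hx : 0 ≤ x) (hC : 0 ≤ C)
    (hx_small : 2 * β ^ 2 * x ≤ 2 * β - m) (hK : 2 * K ≤ (2 * β - m) * C) :
    (1 - β * x) ^ 2 * C + K * x ≤ (1 - m * x) * C := by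
  nlinarith [mul_le_mul_of_nonneg_right hx_small (mul_nonneg hx hC)]

theorem sq_one_sub_div_rpow_mul_div_rpow_add_le {β K C a b t : ℝ} (ht : 1 ≤ t) (ha : 0 ≤ a)
    (hb : b ≤ 1) (hC : 0 ≤ C) (ht_large : 2 * β ^ 2 * t ^ (-b) ≤ 2 * β - (1 + a))
    (hK : 2 * K ≤ (2 * β - (1 + a)) * C) :
    (1 - β / t ^ b) ^ 2 * (C / t ^ a) + K * t ^ (-(a + b)) ≤ C / (t + 1) ^ a := by
  have ht0 : 0 < t := by linarith
  set x := t ^ (-b) with hx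
  have hβx : β / t ^ b = β * x := by rw [hx, rpow_neg ht0.le, div_eq_mul_inv]
  have hx_div : t ^ (-(a + b)) = x / t ^ a := by
    rw [neg_add, rpow_add ht0, rpow_neg ht0.le a]; ring
  calc (1 - β / t ^ b) ^ 2 * (C / t ^ a) + K * t ^ (-(a + b))
      = ((1 - β * x) ^ 2 * C + K * x) / t ^ a := by rw [hβx, hx_div]; ring
    _ ≤ (1 - (1 + a) * x) * C / t ^ a := by
        gcongr; exact sq_one_sub_mul_mul_add_le (by positivity) hC ht_large hK
    _ = C * ((1 - (1 + a) * x) / t ^ a) := by ring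
    _ ≤ C * (1 / (t + 1) ^ a) :=
        mul_le_mul_of_nonneg_left (one_sub_mul_rpow_neg_div_rpow_le ht ha hb) hC
    _ = C / (t + 1) ^ a := by ring

theorem exists_le_div_rpow_of_le_sq_one_sub_div_rpow_mul_add {β K a b : ℝ} (hb0 : 0 < b)
    (hb1 : b ≤ 1) (ha : 0 ≤ a) (hβ : 1 + a < 2 * β) {u : ℕ → ℝ}
    (hrec : ∀ t : ℕ, 1 ≤ t →
      u (t + 1) ≤ (1 - β / (t : ℝ) ^ b) ^ 2 * u t + K * (t : ℝ) ^ (-(a + b))) :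
    ∃ C : ℝ, 0 < C ∧ ∀ t : ℕ, 1 ≤ t → u t ≤ C / (t : ℝ) ^ a := by
  set δ := 2 * β - (1 + a)
  have hδ : 0 < δ := by simp only [δ]; linarith
  obtain ⟨N, hN⟩ : ∃ N : ℕ, ∀ t ≥ N, 2 * β ^ 2 * (t : ℝ) ^ (-b) ≤ δ := by
    have := ((tendsto_rpow_neg_atTop hb0).comp tendsto_natCast_atTop_atTop).const_mul (2 * β ^ 2)
    rw [mul_zero] at this
    exact eventually_atTop.mp (this.eventually (ge_mem_nhds hδ))
  set T := max N 1
  obtain ⟨C₀, hC₀⟩ := ((Set.finite_Icc 1 T).image fun t => u t * (t : ℝ) ^ a).bddAbove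
  set C := max C₀ (max (2 * K / δ) 1)
  have hC : 0 < C := lt_max_of_lt_right (lt_max_of_lt_right one_pos)
  have hK : 2 * K ≤ δ * C := by
    rw [← div_le_iff₀' hδ]; exact (le_max_left _ _).trans (le_max_right _ _)
  refine ⟨C, hC, fun t ht => ?_⟩
  have hinit : ∀ t, 1 ≤ t → t ≤ T → u t ≤ C / (t : ℝ) ^ a := fun t ht htT => by
    rw [le_div_iff₀ (by positivity)]
    exact (hC₀ ⟨t, ⟨ht, htT⟩, rfl⟩).trans (le_max_left _ _)
  rcases le_total t T with htT | hTt
  · exact hinit t ht htT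
  induction t, hTt using Nat.le_induction with
  | base => exact hinit T le_sup_right le_rfl
  | succ t hTt ih =>
    have ht1 : 1 ≤ t := le_sup_right.trans hTt
    push_cast
    calc u (t + 1)
        ≤ (1 - β / (t : ℝ) ^ b) ^ 2 * (C / (t : ℝ) ^ a) + K * (t : ℝ) ^ (-(a + b)) := by
          grw [hrec t ht1, ih ht1]
      _ ≤ C / ((t : ℝ) + 1) ^ a :=
          sq_one_sub_div_rpow_mul_div_rpow_add_le (by exact_mod_cast ht1) ha hb1 hC.le
            (hN t (le_sup_left.trans hTt)) hK

theorem stmt_10_general (Cβ σ C₃ b e : ℝ)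
    (hb0 : 0 < b) (hb1 : b ≤ 1) (he : 0 < e)
    (hCβ' : 1 + b + e < 2 * Cβ)
    (u : ℕ → ℝ)
    (hrec : ∀ t : ℕ, 1 ≤ t →
      u (t + 1) ≤ (1 - Cβ / (t : ℝ) ^ b) ^ 2 * u t
        + (Cβ ^ 2 * σ ^ 2 / C₃) * (t : ℝ) ^ (-(2 * b + e))) :
    ∃ C : ℝ, 0 < C ∧ ∀ t : ℕ, 1 ≤ t → u t ≤ C / (t : ℝ) ^ (b + e) := by
  have hexp : -(2 * b + e) = -((b + e) + b) := by ring
  rw [hexp] at hrec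
  exact exists_le_div_rpow_of_le_sq_one_sub_div_rpow_mul_add hb0 hb1 (by positivity)
    (by linarith) hrec

/-- Instance of Lemma 3 applied to the second moment of the accumulated sampling
error in Corollary 1: decay of order `t^{−(b+e)}`. -/
theorem stmt_10 (Cβ σ C₃ b e : ℝ) (hCβ : 0 < Cβ) (hσ : 0 < σ) (hC₃ : 0 < C₃)
    (hb0 : 0 < b) (hb1 : b ≤ 1) (he : 0 < e)
    (hCβ' : 1 + b + e < 2 * Cβ)
    (u : ℕ → ℝ) (hu : ∀ t : ℕ, 1 ≤ t → 0 ≤ u t)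
    (hrec : ∀ t : ℕ, 1 ≤ t →
      u (t + 1) ≤ (1 - Cβ / (t : ℝ) ^ b) ^ 2 * u t
        + (Cβ ^ 2 * σ ^ 2 / C₃) * (t : ℝ) ^ (-(2 * b + e))) :
    ∃ C : ℝ, 0 < C ∧ ∀ t : ℕ, 1 ≤ t → u t ≤ C / (t : ℝ) ^ (b + e) :=
  stmt_10_general Cβ σ C₃ b e hb0 hb1 he hCβ' u hrec
end

section
/- Let M_g, M_f, L_g, ε, σ, C_α, C_β, C₃ > 0 and a, b, e > 0 with b ≤ 1, (2a − 2b) ∉ [−1, 0], C_β > 1 + 2a − 2b and 2C_β > 1 + b + e. Set α_t = C_α/t^a and β_t = C_β/t^b. Suppose nonnegative real sequences (ℱ_t), (𝒟_t), (e_t) satisfy ℱ₁ = 𝒟₁ = 0, e₁ < ∞, and for all t ≥ 1: ℱ_{t+1}² ≤ (1 − β_t) ℱ_t² + (4M_g²M_f²/ε²)(α_t²/β_t); 𝒟_{t+1} ≤ (1 − β_t) 𝒟_t + (2M_g²M_f²/ε²)(α_t²/β_t) + β_t ℱ_t²; e_{t+1} ≤ (1 − β_t)² e_t + β_t² σ²/(C₃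 t^e). Then there exist constants C_𝒟, C_ℰ > 0 such that for all t ≥ 1: 𝒟_t ≤ C_𝒟 / t^{2a−2b} and e_t ≤ C_ℰ / t^{b+e}; in particular any sequence (w_t) with w_t ≤ (L_g²/2) 𝒟_t² + 2 e_t satisfies w_t ≤ (L_g² C_𝒟² / 2) t^{−(4a−4b)} + 2 C_ℰ t^{−(b+e)}. -/
/-!
Each bound is an instance of one Chung-type lemma: if `x (t+1) ≤ ρ t * x t + B / t^(p+b)` with
eventually `0 ≤ ρ t ≤ 1 - c / t^b`, `b ≤ 1` and `max p 0 < c`, then `x t = O(t^(-p))`.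
The sequence `C / t^p` is a supersolution of the recurrence once `B ≤ (c - max p 0) C`: passing
from `t` to `t + 1` it loses at most the factor `1 - max p 0 / t` (Bernoulli), while the
contraction removes `c / t^b ≥ c / t` of it. This is applied to `ℱ_t²` and then to `𝒟_t`
(whose forcing term `β_t ℱ_t²` is then `O(t^(-(2a-2b)-b))`), with `p = 2a - 2b`, and to `e_t`
with `p = b + e`, using that `(1 - β_t)² ≤ 1 - c / t^b` eventually for every `c < 2 C_β`.
-/

open Real Filter Topology

lemma Real.one_sub_max_div_mul_add_one_rpow_le {s : ℝ} (hs : 0 < s) (p : ℝ) :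
    (1 - max p 0 / s) * (s + 1) ^ p ≤ s ^ p := by
  rcases le_total p 0 with hp | hp
  · simpa [max_eq_right hp] using rpow_le_rpow_of_nonpos hs (by linarith) hp
  · have hlog : -(1 / s) ≤ log (s / (s + 1)) := by
      have := one_sub_inv_le_log_of_pos (show 0 < s / (s + 1) by positivity)
      rwa [inv_div, show 1 - (s + 1) / s = -(1 / s) by field_simp; ring] at this
    have hbernoulli : 1 - p / s ≤ (s / (s + 1)) ^ p := by
      rw [rpow_def_of_pos (by positivity)]
      have := mul_le_mul_of_nonneg_right hlog hp
      rw [neg_mul, one_div_mul_eq_div] at this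
      linarith [add_one_le_exp (log (s / (s + 1)) * p)]
    rw [max_eq_left hp]
    rwa [div_rpow hs.le (by positivity), le_div_iff₀ (by positivity)] at hbernoulli

lemma Real.mul_div_rpow_add_div_rpow_le {s b c p B C ρ : ℝ} (hs : 1 ≤ s) (hb1 : b ≤ 1)
    (hρ : ρ ≤ 1 - c / s ^ b) (hC : 0 ≤ C) (hBC : B ≤ (c - max p 0) * C) :
    ρ * (C / s ^ p) + B / s ^ (p + b) ≤ C / (s + 1) ^ p := by
  have hs0 : 0 < s := by linarith
  set q := max p 0
  have hq : 0 ≤ q := le_max_right p 0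
  calc ρ * (C / s ^ p) + B / s ^ (p + b)
      ≤ (1 - c / s ^ b) * (C / s ^ p) + B / s ^ (p + b) := by gcongr ?_ * _ + _
    _ = C / s ^ p - (c * C - B) / s ^ (p + b) := by
        rw [rpow_add hs0]; field_simp; ring
    _ ≤ C / s ^ p - q * C / s ^ (p + 1) := by
        gcongr C / s ^ p - ?_
        exact div_le_div₀ (by nlinarith) (by linarith) (by positivity)
          (rpow_le_rpow_of_exponent_le hs (by linarith))
    _ = C * ((1 - q / s) / s ^ p) := by
        rw [rpow_add_one hs0.ne']; field_simp
    _ ≤ C * (1 / (s + 1) ^ p) := by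
        gcongr C * ?_
        rw [div_le_div_iff₀ (by positivity) (by positivity), one_mul]
        exact one_sub_max_div_mul_add_one_rpow_le hs0 p
    _ = C / (s + 1) ^ p := mul_one_div C _

lemma Real.div_rpow_sq_div_div_rpow {t : ℝ} (ht : 0 < t) (x y a b : ℝ) :
    (x / t ^ a) ^ 2 / (y / t ^ b) = x ^ 2 / y / t ^ (2 * a - 2 * b + b) := by
  rw [show 2 * a - 2 * b + b = a + a - b by ring, rpow_sub ht, rpow_add ht]
  field_simp

lemma Real.div_rpow_sq_mul_div_mul_rpow {t : ℝ} (ht : 0 < t) (x y z b e : ℝ) :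
    (x / t ^ b) ^ 2 * y / (z * t ^ e) = x ^ 2 * y / z / t ^ (b + e + b) := by
  rw [show b + e + b = b + b + e by ring, rpow_add ht, rpow_add ht]
  field_simp

lemma Real.sq_le_sq_mul_inv_rpow_two_mul {t y C γ : ℝ} (ht : 0 ≤ t) (hy0 : 0 ≤ y)
    (hy : y ≤ C / t ^ γ) : y ^ 2 ≤ C ^ 2 * (t ^ (2 * γ))⁻¹ :=
  calc y ^ 2 ≤ (C / t ^ γ) ^ 2 := pow_le_pow_left₀ hy0 hy 2
    _ = C ^ 2 * (t ^ (2 * γ))⁻¹ := by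
      rw [div_pow, ← rpow_mul_natCast ht, div_eq_mul_inv, mul_comm γ]
      norm_num

section Recurrence

variable {b c p B : ℝ} {x ρ : ℕ → ℝ}

lemma le_div_rpow_of_recurrence {C : ℝ} {N : ℕ} (hN : 1 ≤ N) (hb1 : b ≤ 1) (hC : 0 ≤ C)
    (hBC : B ≤ (c - max p 0) * C)
    (hrec : ∀ t, N ≤ t →
      0 ≤ ρ t ∧ ρ t ≤ 1 - c / (t : ℝ) ^ b ∧ x (t + 1) ≤ ρ t * x t + B / (t : ℝ) ^ (p + b))
    (hxN : x N ≤ C / (N : ℝ) ^ p) (t : ℕ) (ht : N ≤ t) : x t ≤ C / (t : ℝ) ^ p := by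
  induction t, ht using Nat.le_induction with
  | base => exact hxN
  | succ t ht ih =>
    obtain ⟨hρ0, hρ, hx⟩ := hrec t ht
    calc x (t + 1) ≤ ρ t * x t + B / (t : ℝ) ^ (p + b) := hx
      _ ≤ ρ t * (C / (t : ℝ) ^ p) + B / (t : ℝ) ^ (p + b) :=
        add_le_add_left (mul_le_mul_of_nonneg_left ih hρ0) _
      _ ≤ C / ((t + 1 : ℕ) : ℝ) ^ p := by
        push_cast
        exact mul_div_rpow_add_div_rpow_le (by exact_mod_cast hN.trans ht) hb1 hρ hC hBC

theorem exists_le_div_rpow_of_eventually_recurrence (hb1 : b ≤ 1) (hc : 0 < c) (hpc : p < c)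
    (hrec : ∀ᶠ t in atTop,
      0 ≤ ρ t ∧ ρ t ≤ 1 - c / (t : ℝ) ^ b ∧ x (t + 1) ≤ ρ t * x t + B / (t : ℝ) ^ (p + b)) :
    ∃ C, 0 < C ∧ ∀ t : ℕ, 1 ≤ t → x t ≤ C / (t : ℝ) ^ p := by
  obtain ⟨N₀, hN₀⟩ := eventually_atTop.1 hrec
  set N := max N₀ 1
  obtain ⟨M, hM⟩ := Finset.exists_le ((Finset.Icc 1 N).image fun t => x t * (t : ℝ) ^ p)
  have hcq : 0 < c - max p 0 := sub_pos.2 (max_lt hpc hc)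
  set C := max (max M (B / (c - max p 0))) 1
  have hC : 0 < C := zero_lt_one.trans_le (le_max_right _ _)
  have hBC : B ≤ (c - max p 0) * C := by
    rw [← div_le_iff₀' hcq]
    exact le_max_of_le_left (le_max_right _ _)
  have hinit : ∀ t, 1 ≤ t → t ≤ N → x t ≤ C / (t : ℝ) ^ p := fun t ht htN => by
    rw [le_div_iff₀ (by positivity)]
    exact (hM _ (Finset.mem_image_of_mem _ (Finset.mem_Icc.2 ⟨ht, htN⟩))).trans
      (le_max_of_le_left (le_max_left _ _))
  refine ⟨C, hC, fun t ht => ?_⟩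
  rcases le_total t N with htN | hNt
  · exact hinit t ht htN
  · exact le_div_rpow_of_recurrence (le_max_right _ _) hb1 hC.le hBC
      (fun t ht => hN₀ t (le_of_max_le_left ht)) (hinit N (le_max_right _ _) le_rfl) t hNt

lemma tendsto_const_div_natCast_rpow_atTop (hb : 0 < b) (c : ℝ) :
    Tendsto (fun t : ℕ => c / (t : ℝ) ^ b) atTop (𝓝 0) :=
  tendsto_const_nhds.div_atTop ((tendsto_rpow_atTop hb).comp tendsto_natCast_atTop_atTop)

theorem exists_le_div_rpow_of_recurrence (hb : 0 < b) (hb1 : b ≤ 1) (hc : 0 < c) (hpc : p < c)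
    (hrec : ∀ t : ℕ, 1 ≤ t →
      x (t + 1) ≤ (1 - c / (t : ℝ) ^ b) * x t + B / (t : ℝ) ^ (p + b)) :
    ∃ C, 0 < C ∧ ∀ t : ℕ, 1 ≤ t → x t ≤ C / (t : ℝ) ^ p :=
  exists_le_div_rpow_of_eventually_recurrence (ρ := fun t => 1 - c / (t : ℝ) ^ b) hb1 hc hpc <| by
    filter_upwards [(tendsto_const_div_natCast_rpow_atTop hb c).eventually_le_const one_pos,
      eventually_ge_atTop 1] with t hct ht
    exact ⟨sub_nonneg.2 hct, le_rfl, hrec t ht⟩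

lemma eventually_one_sub_div_rpow_sq_le {β : ℝ} (hb : 0 < b) (hc : c < 2 * β) :
    ∀ᶠ t : ℕ in atTop, (1 - β / (t : ℝ) ^ b) ^ 2 ≤ 1 - c / (t : ℝ) ^ b := by
  have hv := (tendsto_const_div_natCast_rpow_atTop hb (β ^ 2)).eventually_le_const
    (sub_pos.2 hc)
  filter_upwards [hv] with t ht
  have hv0 : 0 ≤ 1 / (t : ℝ) ^ b := by positivity
  rw [← mul_one_div] at ht
  rw [← mul_one_div β, ← mul_one_div c]
  nlinarith

end Recurrence

theorem stmt_11_general (Mg Mf Lg ε σ Cα Cβ C₃ a b e : ℝ)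
    (hCβ : 0 < Cβ)
    (hb : 0 < b) (hb1 : b ≤ 1)
    (hCβ1 : 1 + 2 * a - 2 * b < Cβ) (hCβ2 : 1 + b + e < 2 * Cβ)
    (F D ee : ℕ → ℝ)
    (hD : ∀ t : ℕ, 1 ≤ t → 0 ≤ D t)
    (hFrec : ∀ t : ℕ, 1 ≤ t →
      F (t + 1) ^ 2 ≤ (1 - Cβ / (t : ℝ) ^ b) * F t ^ 2
        + (4 * Mg ^ 2 * Mf ^ 2 / ε ^ 2) * ((Cα / (t : ℝ) ^ a) ^ 2 / (Cβ / (t : ℝ) ^ b)))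
    (hDrec : ∀ t : ℕ, 1 ≤ t →
      D (t + 1) ≤ (1 - Cβ / (t : ℝ) ^ b) * D t
        + (2 * Mg ^ 2 * Mf ^ 2 / ε ^ 2) * ((Cα / (t : ℝ) ^ a) ^ 2 / (Cβ / (t : ℝ) ^ b))
        + (Cβ / (t : ℝ) ^ b) * F t ^ 2)
    (heerec : ∀ t : ℕ, 1 ≤ t →
      ee (t + 1) ≤ (1 - Cβ / (t : ℝ) ^ b) ^ 2 * ee t
        + (Cβ / (t : ℝ) ^ b) ^ 2 * σ ^ 2 / (C₃ * (t : ℝ) ^ e)) :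
    ∃ CD CE : ℝ, 0 < CD ∧ 0 < CE ∧
      (∀ t : ℕ, 1 ≤ t → D t ≤ CD / (t : ℝ) ^ (2 * a - 2 * b)) ∧
      (∀ t : ℕ, 1 ≤ t → ee t ≤ CE / (t : ℝ) ^ (b + e)) ∧
      ∀ w : ℕ → ℝ, (∀ t : ℕ, 1 ≤ t → w t ≤ (Lg ^ 2 / 2) * D t ^ 2 + 2 * ee t) →
        ∀ t : ℕ, 1 ≤ t →
          w t ≤ (Lg ^ 2 * CD ^ 2 / 2) * ((t : ℝ) ^ (4 * a - 4 * b))⁻¹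
            + 2 * CE * ((t : ℝ) ^ (b + e))⁻¹ := by
  have hpos : ∀ t : ℕ, 1 ≤ t → (0 : ℝ) < t := fun t ht => by exact_mod_cast ht
  have hγ : 2 * a - 2 * b < Cβ := by linarith
  obtain ⟨CF, -, hF⟩ := exists_le_div_rpow_of_recurrence (x := fun t => F t ^ 2)
    hb hb1 hCβ hγ fun t ht => by
      simpa only [div_rpow_sq_div_div_rpow (hpos t ht), ← mul_div_assoc] using hFrec t ht
  obtain ⟨CD, hCD, hDle⟩ := exists_le_div_rpow_of_recurrence (x := D)
    (B := 2 * Mg ^ 2 * Mf ^ 2 / ε ^ 2 * (Cα ^ 2 / Cβ) + Cβ * CF) hb hb1 hCβ hγ fun t ht => by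
      have hβF : Cβ / (t : ℝ) ^ b * F t ^ 2 ≤ Cβ * CF / (t : ℝ) ^ (2 * a - 2 * b + b) :=
        calc _ ≤ Cβ / (t : ℝ) ^ b * (CF / (t : ℝ) ^ (2 * a - 2 * b)) := by gcongr; exact hF t ht
          _ = _ := by rw [rpow_add (hpos t ht)]; field_simp
      have := hDrec t ht
      rw [div_rpow_sq_div_div_rpow (hpos t ht), ← mul_div_assoc] at this
      rw [add_div]
      linarith
  obtain ⟨c, hc, hc2⟩ :=
    exists_between (max_lt (by linarith : b + e < 2 * Cβ) (by positivity : (0 : ℝ) < 2 * Cβ))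
  obtain ⟨CE, hCE, hee⟩ := exists_le_div_rpow_of_eventually_recurrence
    (ρ := fun t => (1 - Cβ / (t : ℝ) ^ b) ^ 2) (B := Cβ ^ 2 * σ ^ 2 / C₃) hb1
    ((le_max_right _ _).trans_lt hc) ((le_max_left _ _).trans_lt hc) <| by
      filter_upwards [eventually_one_sub_div_rpow_sq_le hb hc2, eventually_ge_atTop 1]
        with t hρ ht
      refine ⟨sq_nonneg _, hρ, ?_⟩
      simpa only [div_rpow_sq_mul_div_mul_rpow (hpos t ht)] using heerec t ht
  refine ⟨CD, CE, hCD, hCE, hDle, hee, fun w hw t ht => (hw t ht).trans ?_⟩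
  have hD2 := sq_le_sq_mul_inv_rpow_two_mul (hpos t ht).le (hD t ht) (hDle t ht)
  rw [show 2 * (2 * a - 2 * b) = 4 * a - 4 * b by ring] at hD2
  calc (Lg ^ 2 / 2) * D t ^ 2 + 2 * ee t
      ≤ (Lg ^ 2 / 2) * (CD ^ 2 * ((t : ℝ) ^ (4 * a - 4 * b))⁻¹)
        + 2 * (CE * ((t : ℝ) ^ (b + e))⁻¹) := by
        gcongr
        exact div_eq_mul_inv CE _ ▸ hee t ht
    _ = _ := by ring

/-- Corollary 1 of the paper in abstract form: decay rates for the dispersion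
sequences `ℱ_t`, `𝒟_t` and the mean squared sampling error `e_t`, and the resulting
bound on the tracking error `w_t ≤ (L_g²/2)𝒟_t² + 2e_t`. -/
theorem stmt_11 (Mg Mf Lg ε σ Cα Cβ C₃ a b e : ℝ)
    (hMg : 0 < Mg) (hMf : 0 < Mf) (hLg : 0 < Lg) (hε : 0 < ε) (hσ : 0 < σ)
    (hCα : 0 < Cα) (hCβ : 0 < Cβ) (hC₃ : 0 < C₃)
    (ha : 0 < a) (hb : 0 < b) (he : 0 < e) (hb1 : b ≤ 1)
    (hab : (2 * a - 2 * b) ∉ Set.Icc (-1 : ℝ) 0)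
    (hCβ1 : 1 + 2 * a - 2 * b < Cβ) (hCβ2 : 1 + b + e < 2 * Cβ)
    (F D ee : ℕ → ℝ)
    (hF : ∀ t : ℕ, 1 ≤ t → 0 ≤ F t) (hD : ∀ t : ℕ, 1 ≤ t → 0 ≤ D t)
    (hee : ∀ t : ℕ, 1 ≤ t → 0 ≤ ee t)
    (hF1 : F 1 = 0) (hD1 : D 1 = 0)
    (hFrec : ∀ t : ℕ, 1 ≤ t →
      F (t + 1) ^ 2 ≤ (1 - Cβ / (t : ℝ) ^ b) * F t ^ 2
        + (4 * Mg ^ 2 * Mf ^ 2 / ε ^ 2) * ((Cα / (t : ℝ) ^ a) ^ 2 / (Cβ / (t : ℝ) ^ b)))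
    (hDrec : ∀ t : ℕ, 1 ≤ t →
      D (t + 1) ≤ (1 - Cβ / (t : ℝ) ^ b) * D t
        + (2 * Mg ^ 2 * Mf ^ 2 / ε ^ 2) * ((Cα / (t : ℝ) ^ a) ^ 2 / (Cβ / (t : ℝ) ^ b))
        + (Cβ / (t : ℝ) ^ b) * F t ^ 2)
    (heerec : ∀ t : ℕ, 1 ≤ t →
      ee (t + 1) ≤ (1 - Cβ / (t : ℝ) ^ b) ^ 2 * ee t
        + (Cβ / (t : ℝ) ^ b) ^ 2 * σ ^ 2 / (C₃ * (t : ℝ) ^ e)) :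
    ∃ CD CE : ℝ, 0 < CD ∧ 0 < CE ∧
      (∀ t : ℕ, 1 ≤ t → D t ≤ CD / (t : ℝ) ^ (2 * a - 2 * b)) ∧
      (∀ t : ℕ, 1 ≤ t → ee t ≤ CE / (t : ℝ) ^ (b + e)) ∧
      ∀ w : ℕ → ℝ, (∀ t : ℕ, 1 ≤ t → w t ≤ (Lg ^ 2 / 2) * D t ^ 2 + 2 * ee t) →
        ∀ t : ℕ, 1 ≤ t →
          w t ≤ (Lg ^ 2 * CD ^ 2 / 2) * ((t : ℝ) ^ (4 * a - 4 * b))⁻¹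
            + 2 * CE * ((t : ℝ) ^ (b + e))⁻¹ :=
  stmt_11_general Mg Mf Lg ε σ Cα Cβ C₃ a b e hCβ hb hb1 hCβ1 hCβ2 F D ee hD hFrec hDrec heerec
end

section
/- Let a, b, c, e be reals satisfying a > b, 0 ≤ a ≤ 1, 0 ≤ b ≤ 1, 4a − 4b ≤ 1, c ≥ 0, e ≥ 0, and suppose m := min{1 − a, 4a − 4b, b + e, c} > 0. Then (1 + max{c, e}) / m ≥ 9/4. Moreover, equality holds for a = 1/5, b = 0, c = e = 4/5, where min{1 − a, 4a − 4b, b + e, c} = 4/5 and 1 + max{c, e} = 9/5. -/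
/-- Exponent-optimization claim from Theorem 1: under the stated constraints,
`(1 + max{c,e}) / min{1−a, 4a−4b, b+e, c} ≥ 9/4`, with equality at
`a = 1/5, b = 0, c = e = 4/5`. -/
theorem stmt_16 (a b c e : ℝ)
    (hab : b < a) (ha0 : 0 ≤ a) (ha1 : a ≤ 1) (hb0 : 0 ≤ b) (hb1 : b ≤ 1)
    (h4 : 4 * a - 4 * b ≤ 1) (hc : 0 ≤ c) (he : 0 ≤ e)
    (hm : 0 < min (min (1 - a) (4 * a - 4 * b)) (min (b + e) c)) :
    9 / 4 ≤ (1 + max c e) / min (min (1 - a) (4 * a - 4 * b)) (min (b + e) c) ∧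
    min (min (1 - (1 / 5 : ℝ)) (4 * (1 / 5) - 4 * 0)) (min (0 + 4 / 5) (4 / 5)) = 4 / 5 ∧
    1 + max (4 / 5 : ℝ) (4 / 5) = 9 / 5 := by
  refine ⟨?_, by norm_num, by norm_num⟩
  set m := min (min (1 - a) (4 * a - 4 * b)) (min (b + e) c) with hmdef
  have h1 : m ≤ 1 - a := le_trans (min_le_left _ _) (min_le_left _ _)
  have h2 : m ≤ 4 * a - 4 * b := le_trans (min_le_left _ _) (min_le_right _ _)
  have h3 : m ≤ c := le_trans (min_le_right _ _) (min_le_right _ _)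
  have h5 : c ≤ max c e := le_max_left _ _
  rw [le_div_iff₀ hm]
  nlinarith
end

section
/- Let m, u ∈ ℝ, v' ≥ 0, γ ∈ [0, 1], ε > 0, and set v = γ v' + (1 − γ) u². Then | m/(√v + ε) − m/(√(γ v') + ε) | ≤ √(1 − γ) · |m| · |u| / ( ε (√(γ v') + ε) ). -/
/-- Scalar inequality for the Adam-style second-moment update (bound on ℬ1 in the
proof of Theorem 1): the change in the preconditioned step caused by the
second-moment update is controlled. -/
theorem stmt_18 (m u v' γ ε : ℝ) (hv' : 0 ≤ v')
    (hγ : γ ∈ Set.Icc (0 : ℝ) 1) (hε : 0 < ε) :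
    |m / (Real.sqrt (γ * v' + (1 - γ) * u ^ 2) + ε) - m / (Real.sqrt (γ * v') + ε)| ≤
      Real.sqrt (1 - γ) * |m| * |u| / (ε * (Real.sqrt (γ * v') + ε)) := by
  obtain ⟨hγ0, hγ1⟩ := hγ
  set A := Real.sqrt (γ * v' + (1 - γ) * u ^ 2) with hAdef
  set B := Real.sqrt (γ * v') with hBdef
  have hB0 : 0 ≤ B := Real.sqrt_nonneg _
  have hA0 : 0 ≤ A := Real.sqrt_nonneg _
  have hAε : 0 < A + ε := by linarith
  have hBε : 0 < B + ε := by linarith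
  have hBA : B ≤ A := Real.sqrt_le_sqrt (by nlinarith [sq_nonneg u])
  set c := Real.sqrt (1 - γ) * |u| with hcdef
  have hc0 : 0 ≤ c := mul_nonneg (Real.sqrt_nonneg _) (abs_nonneg _)
  have hsub : A - B ≤ c := by
    have hB2 : B ^ 2 = γ * v' := by
      rw [hBdef, sq, Real.mul_self_sqrt (by positivity)]
    have hc2 : c ^ 2 = (1 - γ) * u ^ 2 := by
      rw [hcdef, mul_pow, sq_abs, Real.sq_sqrt (by linarith)]
    have hle : γ * v' + (1 - γ) * u ^ 2 ≤ (B + c) ^ 2 := by nlinarith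
    have : A ≤ B + c := by
      calc A ≤ Real.sqrt ((B + c) ^ 2) := Real.sqrt_le_sqrt hle
        _ = B + c := Real.sqrt_sq (by linarith)
    linarith
  have key : m / (A + ε) - m / (B + ε) = m * (B - A) / ((A + ε) * (B + ε)) := by
    field_simp
    ring
  rw [key, abs_div, abs_mul]
  have habsBA : |B - A| = A - B := by rw [abs_sub_comm]; exact abs_of_nonneg (by linarith)
  have habsden : |(A + ε) * (B + ε)| = (A + ε) * (B + ε) := abs_of_pos (by positivity)
  rw [habsBA, habsden]
  have h1 : |m| * (A - B) ≤ Real.sqrt (1 - γ) * |m| * |u| := by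
    calc |m| * (A - B) ≤ |m| * c := by
          exact mul_le_mul_of_nonneg_left hsub (abs_nonneg _)
      _ = Real.sqrt (1 - γ) * |m| * |u| := by rw [hcdef]; ring
  exact div_le_div₀ (by positivity) h1 (by positivity)
    (by nlinarith)
end
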